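/- Let 𝓘 be a maximal nested collection on the vertex set V of a finite tree Γ. A nonempty connected subset S ⊆ V belongs to 𝓘 if and only if I_v ⊆ S for every v ∈ S. -/

import Mathlib

namespace Paper

variable {V : Type*}

/-- The subgraph of `G` induced on `S` is connected (any two vertices of `S` are joined
by a walk inside `S`). -/
def Conn (G : SimpleGraph V) (S : Set V) : Prop := (G.induce S).Preconnected

/-- `C` is a connected component of (the subgraph of `G` induced on) `U`:
a maximal nonempty connected subset of `U`. -/
def IsCompOf (G : SimpleGraph V) (C U : Set V) : Prop :=
  C.Nonempty ∧ C ⊆ U ∧ Conn G C ∧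
    ∀ D : Set V, C ⊆ D → D ⊆ U → Conn G D → D = C

/-- A nested collection on (the vertex set of) `G`: a family of nonempty connected
subsets such that (1) any two members are nested or disjoint, and (2) the connected
components of the union of any pairwise disjoint subfamily are exactly the members of
that subfamily. -/
def Nested (G : SimpleGraph V) (𝓘 : Set (Set V)) : Prop :=
  (∀ S ∈ 𝓘, S.Nonempty ∧ Conn G S) ∧
  (∀ S ∈ 𝓘, ∀ T ∈ 𝓘, S ⊆ T ∨ T ⊆ S ∨ S ∩ T = ∅) ∧
  (∀ 𝓙 ⊆ 𝓘, (𝓙.Pairwise fun A B => A ∩ B = ∅) →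
    ∀ C : Set V, IsCompOf G C (⋃₀ 𝓙) ↔ C ∈ 𝓙)

/-- A maximal nested collection: a nested collection whose union is all of `V` and
which is not properly contained in any other nested collection. -/
def MaxNested (G : SimpleGraph V) (𝓘 : Set (Set V)) : Prop :=
  Nested G 𝓘 ∧ ⋃₀ 𝓘 = Set.univ ∧
    ∀ 𝓙 : Set (Set V), Nested G 𝓙 → 𝓘 ⊆ 𝓙 → 𝓙 = 𝓘

/-- `Iv` assigns to each vertex `v` the smallest element of `𝓘` containing `v`
(denoted `I_v`). -/
def IsLeastContaining (𝓘 : Set (Set V)) (Iv : V → Set V) : Prop :=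
  ∀ v : V, Iv v ∈ 𝓘 ∧ v ∈ Iv v ∧ ∀ J ∈ 𝓘, v ∈ J → Iv v ⊆ J

/-- The vertex set `[x,y]` of the unique path in a tree `G` from `x` to `y`:
the vertices lying on every path from `x` to `y`. -/
def interval (G : SimpleGraph V) (x y : V) : Set V :=
  {u | ∀ p : G.Walk x y, p.IsPath → u ∈ p.support}

/-- `S` is rooted with respect to the nested collection (with least-member function
`Iv`): `S` is nonempty, connected, and, `m` denoting the unique element of `S` with
`S ⊆ I_m`, for all `i, j ∈ S` one has `i ∈ I_j` iff `j ∈ [i, m]`. -/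
def Rooted (G : SimpleGraph V) (Iv : V → Set V) (S : Set V) : Prop :=
  S.Nonempty ∧ Conn G S ∧
    ∃ m ∈ S, S ⊆ Iv m ∧ ∀ i ∈ S, ∀ j ∈ S, (i ∈ Iv j ↔ j ∈ interval G i m)

/-- `S̄ := {v ∈ S : I_v ⊄ S}`. -/
def bar (Iv : V → Set V) (S : Set V) : Set V := {v ∈ S | ¬ Iv v ⊆ S}

/-- `S` is weakly rooted: `S` is nonempty, connected, and either `S̄ = ∅` or `S̄` is a
(nonempty) connected rooted set. -/
def WeaklyRooted (G : SimpleGraph V) (Iv : V → Set V) (S : Set V) : Prop :=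
  S.Nonempty ∧ Conn G S ∧ (bar Iv S = ∅ ∨ Rooted G Iv (bar Iv S))

/-- Two (nonempty connected) subsets `I`, `J` are compatible if `I ⊆ J`, or `J ⊆ I`, or
they are disjoint and no edge of `G` joins a vertex of `I` to a vertex of `J`. -/
def Compatible (G : SimpleGraph V) (I J : Set V) : Prop :=
  I ⊆ J ∨ J ⊆ I ∨ (I ∩ J = ∅ ∧ ∀ a ∈ I, ∀ b ∈ J, ¬ G.Adj a b)

end Paper

/-!
The forward direction is the minimality of `I_v`. Conversely, let `S` contain `I_v` for each
of its vertices and let `T ∈ 𝓘`. Comparing `I_v` with `T` for `v ∈ S` shows that either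
`T ⊆ S`, or every `v ∈ S` lies in `T` or has no neighbour in `T`; as `S` is connected, `S` and
`T` are then nested, or disjoint with no edge between them. Hence `𝓘 ∪ {S}` is still a nested
collection, and maximality puts `S` in `𝓘`.
-/

namespace SimpleGraph

lemma Reachable.imp_of_adj {W : Type*} {H : SimpleGraph W} {P : W → Prop}
    (hP : ∀ ⦃x y⦄, H.Adj x y → P x → P y) {a b : W} (h : H.Reachable a b) :
    P a → P b := by
  obtain ⟨p⟩ := h
  induction p with
  | nil => exact id
  | cons hadj _ ih => exact fun ha => ih (hP hadj ha)

end SimpleGraph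

namespace Paper

variable {V : Type*} {G : SimpleGraph V}

lemma Conn.subset_of_not_adj {U T : Set V} (hU : Conn G U) {a : V} (haU : a ∈ U) (haT : a ∈ T)
    (hT : ∀ x ∈ T, ∀ y ∈ U, y ∉ T → ¬ G.Adj x y) : U ⊆ T := fun b hb =>
  (hU ⟨a, haU⟩ ⟨b, hb⟩).imp_of_adj (P := fun u : U => u.1 ∈ T)
    (fun x y hxy hx => by_contra fun hy => hT x hx y y.2 hy hxy) haT

lemma isCompOf_sUnion_iff {K : Set (Set V)} (hK : ∀ A ∈ K, A.Nonempty ∧ Conn G A)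
    (hsep : K.Pairwise fun A B => ∀ a ∈ A, ∀ b ∈ B, ¬ G.Adj a b) (C : Set V) :
    IsCompOf G C (⋃₀ K) ↔ C ∈ K := by
  have hout : ∀ T ∈ K, ∀ x ∈ T, ∀ y ∈ ⋃₀ K, y ∉ T → ¬ G.Adj x y := by
    rintro T hT x hx y ⟨B, hB, hyB⟩ hyT
    exact hsep hT hB (by rintro rfl; exact hyT hyB) x hx y hyB
  constructor
  · rintro ⟨⟨c, hc⟩, hCU, hC, hmax⟩
    obtain ⟨T, hT, hcT⟩ := hCU hc
    have hCT : C ⊆ T :=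
      hC.subset_of_not_adj hc hcT fun x hx y hy => hout T hT x hx y (hCU hy)
    exact hmax T hCT (Set.subset_sUnion_of_mem hT) (hK T hT).2 ▸ hT
  · intro hC
    obtain ⟨⟨c, hc⟩, hCconn⟩ := hK C hC
    refine ⟨⟨c, hc⟩, Set.subset_sUnion_of_mem hC, hCconn, fun D hCD hDU hD => ?_⟩
    have hDC : D ⊆ C :=
      hD.subset_of_not_adj (hCD hc) hc fun x hx y hy => hout C hC x hx y (hDU hy)
    exact hDC.antisymm hCD

lemma compatible_self (A : Set V) : Compatible G A A := Or.inl subset_rfl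

lemma Compatible.symm {A B : Set V} (h : Compatible G A B) : Compatible G B A := by
  rcases h with h | h | ⟨hd, h⟩
  · exact Or.inr (Or.inl h)
  · exact Or.inl h
  · refine Or.inr (Or.inr ⟨Set.inter_comm A B ▸ hd, fun b hb a ha hab => ?_⟩)
    exact h a ha b hb hab.symm

lemma Compatible.not_adj {A B : Set V} (h : Compatible G A B) (hd : A ∩ B = ∅) :
    ∀ a ∈ A, ∀ b ∈ B, ¬ G.Adj a b := by
  intro a ha b hb
  rcases h with h | h | ⟨-, h⟩
  · exact (hd.subset ⟨ha, h ha⟩).elim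
  · exact (hd.subset ⟨h hb, hb⟩).elim
  · exact h a ha b hb

lemma nested_of_forall_compatible {F : Set (Set V)} (hF : ∀ A ∈ F, A.Nonempty ∧ Conn G A)
    (hcomp : ∀ A ∈ F, ∀ B ∈ F, Compatible G A B) : Nested G F :=
  ⟨hF, fun A hA B hB => (hcomp A hA B hB).imp_right (Or.imp_right And.left),
    fun _ hK hdisj => isCompOf_sUnion_iff (fun A hA => hF A (hK hA))
      fun A hA B hB hAB => (hcomp A (hK hA) B (hK hB)).not_adj (hdisj hA hB hAB)⟩

/-- An edge between disjoint members would make their union connected, against condition (2)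
of `Nested`. -/
lemma Nested.compatible {F : Set (Set V)} (hN : Nested G F) {A B : Set V} (hA : A ∈ F)
    (hB : B ∈ F) : Compatible G A B := by
  rcases hN.2.1 A hA B hB with h | h | hd
  · exact Or.inl h
  · exact Or.inr (Or.inl h)
  refine Or.inr (Or.inr ⟨hd, fun a ha b hb hab => ?_⟩)
  have hcomp : IsCompOf G A (⋃₀ {A, B}) :=
    (hN.2.2 {A, B} (Set.pair_subset hA hB)
      (Set.pairwise_pair.2 fun _ => ⟨hd, Set.inter_comm A B ▸ hd⟩) A).2 (Set.mem_insert _ _)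
  have hAB : A ∪ B = A := hcomp.2.2.2 _ Set.subset_union_left (Set.sUnion_pair A B).ge
    (SimpleGraph.connected_induce_union (hN.1 A hA).2 (hN.1 B hB).2 ha hb hab).preconnected
  exact hd.subset ⟨hAB ▸ Or.inr hb, hb⟩

lemma Nested.insert {F : Set (Set V)} (hN : Nested G F) {S : Set V} (hS1 : S.Nonempty)
    (hS2 : Conn G S) (hS : ∀ T ∈ F, Compatible G S T) : Nested G (insert S F) := by
  refine nested_of_forall_compatible ?_ ?_
  · rintro A (rfl | hA)
    exacts [⟨hS1, hS2⟩, hN.1 A hA]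
  · rintro A (rfl | hA) B (rfl | hB)
    exacts [compatible_self _, hS B hB, (hS A hA).symm, hN.compatible hA hB]

lemma Nested.compatible_of_forall_subset {F : Set (Set V)} (hN : Nested G F) {Iv : V → Set V}
    (hIv : IsLeastContaining F Iv) {S : Set V} (hS : Conn G S) (hSI : ∀ v ∈ S, Iv v ⊆ S)
    {T : Set V} (hT : T ∈ F) : Compatible G S T := by
  by_cases hTS : T ⊆ S
  · exact Or.inr (Or.inl hTS)
  have hnbr : ∀ y ∈ S, y ∉ T → ∀ x ∈ T, ¬ G.Adj y x := by
    intro y hy hyT x hx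
    rcases hN.compatible (hIv y).1 hT with h | h | ⟨-, h⟩
    · exact absurd (h (hIv y).2.1) hyT
    · exact absurd (h.trans (hSI y hy)) hTS
    · exact h y (hIv y).2.1 x hx
  by_cases hST : S ∩ T = ∅
  · refine Or.inr (Or.inr ⟨hST, fun a ha => hnbr a ha fun haT => ?_⟩)
    exact hST.subset ⟨ha, haT⟩
  obtain ⟨v, hvS, hvT⟩ := Set.nonempty_iff_ne_empty.2 hST
  exact Or.inl (hS.subset_of_not_adj hvS hvT fun x hx y hy hyT hxy => hnbr y hy hyT x hx hxy.symm)

lemma MaxNested.mem_of_forall_subset {F : Set (Set V)} (hF : MaxNested G F) {Iv : V → Set V}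
    (hIv : IsLeastContaining F Iv) {S : Set V} (hS1 : S.Nonempty) (hS2 : Conn G S)
    (hSI : ∀ v ∈ S, Iv v ⊆ S) : S ∈ F := by
  obtain ⟨hN, -, hmax⟩ := hF
  have hins : Nested G (insert S F) :=
    hN.insert hS1 hS2 fun _ hT => hN.compatible_of_forall_subset hIv hS2 hSI hT
  exact hmax _ hins (Set.subset_insert S F) ▸ Set.mem_insert S F

end Paper

theorem statement_10_general {V : Type*} (G : SimpleGraph V)
    (𝓘 : Set (Set V)) (h𝓘 : Paper.MaxNested G 𝓘)
    (Iv : V → Set V) (hIv : Paper.IsLeastContaining 𝓘 Iv)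
    (S : Set V) (hS1 : S.Nonempty) (hS2 : Paper.Conn G S) :
    S ∈ 𝓘 ↔ ∀ v ∈ S, Iv v ⊆ S :=
  ⟨fun hS v hv => (hIv v).2.2 S hS hv, h𝓘.mem_of_forall_subset hIv hS1 hS2⟩

/-- Let `𝓘` be a maximal nested collection on the vertex set `V` of a finite tree. A
nonempty connected subset `S ⊆ V` belongs to `𝓘` iff `I_v ⊆ S` for every `v ∈ S`. -/
theorem statement_10 {V : Type*} [Fintype V] (G : SimpleGraph V) (hG : G.IsTree)
    (𝓘 : Set (Set V)) (h𝓘 : Paper.MaxNested G 𝓘)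
    (Iv : V → Set V) (hIv : Paper.IsLeastContaining 𝓘 Iv)
    (S : Set V) (hS1 : S.Nonempty) (hS2 : Paper.Conn G S) :
    S ∈ 𝓘 ↔ ∀ v ∈ S, Iv v ⊆ S :=
  statement_10_general G 𝓘 h𝓘 Iv hIv S hS1 hS2
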